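/- arXiv:2103.08742 — 5 statements merged into one kernel-verified Lean document; each statement's English description precedes it below -/
import Mathlib

section
/- For an n-by-n matrix M over a field (n ≥ 2), if the determinant of the central (n-2)-by-(n-2) submatrix (obtained by deleting the first and last rows and columns) is nonzero, then det(M) · det(M with first and last rows and columns deleted) = det(M with first row and first column deleted) · det(M with last row and last column deleted) − det(M with first row and last column deleted) · det(M with last row and first column deleted). -/
/-! If the central minor `A` of `M` is invertible, write `M` (after moving the first and last
indices to the end) as a block matrix with `2 × 2` Schur complement `S = D - C A⁻¹ B`.
Then `det M = det A * det S`, and each of the four minors of size `n + 1` is `det A` times an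
entry of `S`, so the identity is `det S = S₀₀ S₁₁ - S₀₁ S₁₀` multiplied by `(det A)²`.
The general case is a polynomial identity in the entries of `M`; it therefore suffices to prove it
for the generic matrix over `ℤ`, whose central minor is a nonzero polynomial and hence a unit in
the fraction field. -/

theorem finRotate_castSucc {n : ℕ} (i : Fin n) : finRotate (n + 1) i.castSucc = i.succ :=
  finRotate_of_lt i.isLt

namespace Matrix

variable {R : Type*} [CommRing R]

theorem det_submatrix_mul_det_submatrix_swap {ι κ : Type*} [Fintype ι] [DecidableEq ι]
    [Fintype κ] [DecidableEq κ] (e e' : ι ≃ κ) (A B : Matrix κ κ R) :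
    (A.submatrix e e').det * (B.submatrix e' e).det = A.det * B.det := by
  have hA : A.submatrix e e' = (A.submatrix id (e.symm.trans e')).submatrix e e := by
    ext i j; simp
  have hB : B.submatrix e' e = (B.submatrix id (e.symm.trans e').symm).submatrix e' e' := by
    ext i j; simp
  rw [hA, hB, det_submatrix_equiv_self, det_submatrix_equiv_self, det_permute', det_permute',
    Equiv.Perm.sign_symm, mul_mul_mul_comm, ← Int.cast_mul, ← Units.val_mul, Int.units_mul_self]
  simp

theorem det_submatrix_mvPolynomialX_ne_zero {m k : Type*} [Fintype k] [DecidableEq k]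
    [Nontrivial R] (f : k → m) (hf : Function.Injective f) :
    ((mvPolynomialX m m R).submatrix f f).det ≠ 0 := by
  have : (mvPolynomialX m m R).submatrix f f
      = (mvPolynomialX k k R).map (MvPolynomial.rename (Prod.map f f)) := by
    ext i j
    simp
  rw [this, ← AlgHom.mapMatrix_apply, ← AlgHom.map_det]
  exact (map_ne_zero_iff _ (MvPolynomial.rename_injective _ (hf.prodMap hf))).mpr
    (det_mvPolynomialX_ne_zero k R)

section Border

variable {m ι : Type*} [Fintype m] [DecidableEq m]

def borderAt (i : ι) : m ⊕ Fin 1 → m ⊕ ι := Sum.map id fun _ => i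

theorem det_fromBlocks_submatrix_borderAt [Fintype ι] (A : Matrix m m R) [Invertible A]
    (B : Matrix m ι R) (C : Matrix ι m R) (D : Matrix ι ι R) (i j : ι) :
    ((fromBlocks A B C D).submatrix (borderAt i) (borderAt j)).det
      = A.det * (D - C * ⅟A * B) i j := by
  have : (fromBlocks A B C D).submatrix (borderAt i) (borderAt j) = fromBlocks A
      (B.submatrix id fun _ => j) (C.submatrix (fun _ => i) id)
      (D.submatrix (fun _ => i) fun _ => j) := by
    ext (k | k) (l | l) <;> rfl
  rw [this, det_fromBlocks₁₁, det_fin_one]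
  simp [Matrix.mul_apply]

theorem det_fromBlocks_mul_det (A : Matrix m m R) [Invertible A] (B : Matrix m (Fin 2) R)
    (C : Matrix (Fin 2) m R) (D : Matrix (Fin 2) (Fin 2) R) :
    (fromBlocks A B C D).det * A.det
      = ((fromBlocks A B C D).submatrix (borderAt 0) (borderAt 0)).det
          * ((fromBlocks A B C D).submatrix (borderAt 1) (borderAt 1)).det
        - ((fromBlocks A B C D).submatrix (borderAt 0) (borderAt 1)).det
          * ((fromBlocks A B C D).submatrix (borderAt 1) (borderAt 0)).det := by
  simp only [det_fromBlocks_submatrix_borderAt, det_fromBlocks₁₁, det_fin_two]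
  ring

end Border

section Condensation

variable {n : ℕ}

def desnanotJacobiDefect (M : Matrix (Fin (n + 2)) (Fin (n + 2)) R) : R :=
  M.det * (M.submatrix (fun a : Fin n => a.succ.castSucc) (fun a : Fin n => a.succ.castSucc)).det
    - ((M.submatrix Fin.succ Fin.succ).det * (M.submatrix Fin.castSucc Fin.castSucc).det
      - (M.submatrix Fin.succ Fin.castSucc).det * (M.submatrix Fin.castSucc Fin.succ).det)

theorem _root_.RingHom.map_desnanotJacobiDefect {S : Type*} [CommRing S] (f : R →+* S)
    (M : Matrix (Fin (n + 2)) (Fin (n + 2)) R) :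
    f (desnanotJacobiDefect M) = desnanotJacobiDefect (M.map f) := by
  simp [desnanotJacobiDefect, RingHom.map_det, RingHom.mapMatrix_apply, submatrix_map]

theorem desnanotJacobiDefect_eq_zero_of_isUnit (M : Matrix (Fin (n + 2)) (Fin (n + 2)) R)
    (h : IsUnit (M.submatrix (fun a : Fin n => a.succ.castSucc)
      (fun a : Fin n => a.succ.castSucc)).det) :
    desnanotJacobiDefect M = 0 := by
  -- `e` lists the interior indices first, then `last` and `0`; `gLast` and `gFirst` do the same
  -- for the indices of the minors without the first and without the last row, respectively.
  set e : Fin n ⊕ Fin 2 ≃ Fin (n + 2) := finSumFinEquiv.trans (finRotate _)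
  set gLast : Fin n ⊕ Fin 1 ≃ Fin (n + 1) := finSumFinEquiv
  set gFirst : Fin n ⊕ Fin 1 ≃ Fin (n + 1) := finSumFinEquiv.trans (finRotate _)
  set N := M.submatrix e e
  have hA : N.toBlocks₁₁ = M.submatrix (fun a : Fin n => a.succ.castSucc)
      (fun a : Fin n => a.succ.castSucc) := by
    ext a b
    exact congrArg₂ M (finRotate_castSucc a.castSucc) (finRotate_castSucc b.castSucc)
  have hlast : e ∘ borderAt 0 = Fin.succ ∘ gLast := by
    funext x
    rcases x with a | a
    · exact finRotate_castSucc a.castSucc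
    · obtain rfl := Subsingleton.elim a 0
      exact finRotate_castSucc (Fin.last n)
  have hfirst : e ∘ borderAt 1 = Fin.castSucc ∘ gFirst := by
    funext x
    rcases x with a | a
    · exact (finRotate_castSucc a.castSucc).trans
        (congrArg Fin.castSucc (finRotate_castSucc a)).symm
    · obtain rfl := Subsingleton.elim a 0
      change finRotate _ (Fin.last _) = Fin.castSucc (finRotate _ (Fin.last _))
      rw [finRotate_last, finRotate_last, Fin.castSucc_zero]
  have : Invertible N.toBlocks₁₁ := invertibleOfIsUnitDet _ (hA ▸ h)
  have key :=
    det_fromBlocks_mul_det N.toBlocks₁₁ N.toBlocks₁₂ N.toBlocks₂₁ N.toBlocks₂₂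
  have hcross := det_submatrix_mul_det_submatrix_swap gLast gFirst
    (M.submatrix Fin.succ Fin.castSucc) (M.submatrix Fin.castSucc Fin.succ)
  have hsucc := det_submatrix_equiv_self gLast (M.submatrix Fin.succ Fin.succ)
  have hcastSucc := det_submatrix_equiv_self gFirst (M.submatrix Fin.castSucc Fin.castSucc)
  simp only [submatrix_submatrix] at hcross hsucc hcastSucc
  simp only [fromBlocks_toBlocks, N, submatrix_submatrix, hlast, hfirst, det_submatrix_equiv_self,
    hsucc, hcastSucc, hcross] at key
  rw [desnanotJacobiDefect, ← hA, key]
  ring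

theorem desnanotJacobiDefect_mvPolynomialX :
    desnanotJacobiDefect (mvPolynomialX (Fin (n + 2)) (Fin (n + 2)) ℤ) = 0 := by
  set K := FractionRing (MvPolynomial (Fin (n + 2) × Fin (n + 2)) ℤ)
  apply IsFractionRing.injective _ K
  rw [map_zero, RingHom.map_desnanotJacobiDefect]
  apply desnanotJacobiDefect_eq_zero_of_isUnit
  rw [submatrix_map, ← RingHom.mapMatrix_apply, ← RingHom.map_det, isUnit_iff_ne_zero,
    map_ne_zero_iff _ (IsFractionRing.injective _ K)]
  exact det_submatrix_mvPolynomialX_ne_zero _ fun a b hab => by simpa using hab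

theorem desnanotJacobiDefect_eq_zero (M : Matrix (Fin (n + 2)) (Fin (n + 2)) R) :
    desnanotJacobiDefect M = 0 := by
  have := congrArg (MvPolynomial.eval₂Hom (Int.castRingHom R) fun p => M p.1 p.2)
    (desnanotJacobiDefect_mvPolynomialX (n := n))
  rwa [map_zero, RingHom.map_desnanotJacobiDefect, MvPolynomial.coe_eval₂Hom,
    mvPolynomialX_map_eval₂] at this

end Condensation

end Matrix

theorem desnanot_jacobi_general {K : Type*} [Field K] (n : ℕ)
    (M : Matrix (Fin (n + 2)) (Fin (n + 2)) K) :
    M.det * (M.submatrix (fun a : Fin n => a.succ.castSucc) (fun a : Fin n => a.succ.castSucc)).det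
      = (M.submatrix Fin.succ Fin.succ).det * (M.submatrix Fin.castSucc Fin.castSucc).det
        - (M.submatrix Fin.succ Fin.castSucc).det * (M.submatrix Fin.castSucc Fin.succ).det :=
  sub_eq_zero.mp (Matrix.desnanotJacobiDefect_eq_zero M)

/-- Desnanot–Jacobi–Sylvester identity: for an (n+2)-by-(n+2) matrix `M` over a field,
if the central n-by-n minor (first and last rows and columns deleted) is nonzero, then
`det M * det(central) = det(M del first row/col) * det(M del last row/col)
  - det(M del first row, last col) * det(M del last row, first col)`. -/
theorem desnanot_jacobi {K : Type*} [Field K] (n : ℕ)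
    (M : Matrix (Fin (n + 2)) (Fin (n + 2)) K)
    (h : (M.submatrix (fun a : Fin n => a.succ.castSucc) (fun a : Fin n => a.succ.castSucc)).det ≠ 0) :
    M.det * (M.submatrix (fun a : Fin n => a.succ.castSucc) (fun a : Fin n => a.succ.castSucc)).det
      = (M.submatrix Fin.succ Fin.succ).det * (M.submatrix Fin.castSucc Fin.castSucc).det
        - (M.submatrix Fin.succ Fin.castSucc).det * (M.submatrix Fin.castSucc Fin.succ).det :=
  desnanot_jacobi_general n M
end

section
/- For any positive integers m and n and any signature (e_1, e_2, ..., e_{min(m,n)}) with each e_k ∈ {−1, 1}, there exists a real m-by-n matrix A such that for every k and every k-by-k minor D of A, e_k · D > 0. -/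
/-!
Take `A_ε = X · diag(σ_s ε^s) · Yᵀ` with `X i s = i ^ s`, `Y j s = j ^ s` (`s < min m n`), where the
signs `σ_s = ±1` are chosen so that `σ_0 ⋯ σ_(k-1) = e_k`. Expanding a `k × k` minor multilinearly
in its rows gives a polynomial in `ε` with one term per map `g : Fin k → Fin (min m n)`. Only
injective `g` contribute, and the lowest power `ε ^ (0 + 1 + ⋯ + (k-1))` comes exactly from the
permutations of `{0, …, k-1}`; its coefficient is `e_k` times a product of two Vandermonde
determinants at increasing nodes, hence has the sign of `e_k`. So every minor has the right sign
for all small `ε > 0`, and as there are finitely many minors, one `ε` serves them all.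
-/

open Finset Matrix Filter Topology

theorem Finset.sum_range_card_le_sum (S : Finset ℕ) : ∑ j ∈ range #S, j ≤ ∑ s ∈ S, s := by
  induction S using Finset.induction_on_max with
  | empty => simp
  | insert a s ha ih =>
    have has : a ∉ s := fun h => (ha a h).false
    have hsa : #s ≤ a := by simpa using card_le_card (fun x hx => mem_range.2 (ha x hx))
    rw [sum_insert has, card_insert_of_notMem has, sum_range_succ]
    omega

theorem Finset.subset_range_card_of_sum_le {S : Finset ℕ}
    (h : ∑ s ∈ S, s ≤ ∑ j ∈ range #S, j) : S ⊆ range #S := by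
  induction S using Finset.induction_on_max with
  | empty => simp
  | insert a s ha ih =>
    have has : a ∉ s := fun h => (ha a h).false
    have hsa : #s ≤ a := by simpa using card_le_card (fun x hx => mem_range.2 (ha x hx))
    rw [sum_insert has, card_insert_of_notMem has, sum_range_succ] at h
    have hs := s.sum_range_card_le_sum
    rw [card_insert_of_notMem has, insert_subset_iff, range_add_one, mem_insert]
    exact ⟨Or.inl (by omega), (ih (by omega)).trans (subset_insert _ _)⟩

theorem sum_range_card_le_sum_of_injective {ι : Type*} [Fintype ι] {g : ι → ℕ}
    (hg : Function.Injective g) : ∑ j ∈ range (Fintype.card ι), j ≤ ∑ i, g i := by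
  simpa [card_image_of_injective _ hg, sum_image hg.injOn] using
    (univ.image g).sum_range_card_le_sum

theorem lt_card_of_sum_le_of_injective {ι : Type*} [Fintype ι] {g : ι → ℕ}
    (hg : Function.Injective g) (h : ∑ i, g i ≤ ∑ j ∈ range (Fintype.card ι), j) (i : ι) :
    g i < Fintype.card ι := by
  have := subset_range_card_of_sum_le (S := univ.image g)
    (by simpa [card_image_of_injective _ hg, sum_image hg.injOn] using h)
  simpa [card_image_of_injective _ hg] using this (mem_image_of_mem g (mem_univ i))

namespace Matrix

variable {R n p : Type*} [CommRing R] [Fintype n] [DecidableEq n]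

def detExpansionTerm (M : Matrix n p R) (N : Matrix p n R) (g : n → p) : R :=
  (∏ i, M i (g i)) * (N.submatrix g id).det

theorem det_mul_eq_sum_detExpansionTerm [Fintype p] (M : Matrix n p R) (N : Matrix p n R) :
    (M * N).det = ∑ g : n → p, detExpansionTerm M N g := by
  have hrows : M * N = fun i => ∑ s, M i s • N s := by
    ext i j; simp [mul_apply, Finset.sum_apply]
  rw [hrows]
  change (detRowAlternating : (n → R) [⋀^n]→ₗ[R] R).toMultilinearMap _ = _
  rw [MultilinearMap.map_sum]
  refine sum_congr rfl fun g _ => ?_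
  rw [MultilinearMap.map_smul_univ, smul_eq_mul]
  rfl

theorem detExpansionTerm_eq_zero_of_not_injective (M : Matrix n p R)
    (N : Matrix p n R) {g : n → p} (hg : ¬ Function.Injective g) :
    detExpansionTerm M N g = 0 := by
  obtain ⟨i, j, hij, hne⟩ := Function.not_injective_iff.mp hg
  rw [detExpansionTerm, det_zero_of_row_eq hne (funext fun l => by simp [hij]), mul_zero]

theorem injective_of_detExpansionTerm_ne_zero {M : Matrix n p R}
    {N : Matrix p n R} {g : n → p} (hg : detExpansionTerm M N g ≠ 0) : Function.Injective g :=
  not_not.mp fun hni => hg (detExpansionTerm_eq_zero_of_not_injective M N hni)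

end Matrix

theorem Matrix.sum_detExpansionTerm_of_sum_val_eq {R : Type*} [CommRing R] {k p : ℕ}
    (hkp : k ≤ p) (M : Matrix (Fin k) (Fin p) R) (N : Matrix (Fin p) (Fin k) R) :
    ∑ g : Fin k → Fin p with ∑ i, (g i : ℕ) = ∑ j ∈ range k, j, detExpansionTerm M N g =
      (M.submatrix id (Fin.castLE hkp)).det * (N.submatrix (Fin.castLE hkp) id).det := by
  -- the lowest-degree terms are those of the maps `g` that permute `Fin k ⊆ Fin p`
  rw [← det_mul, det_mul_eq_sum_detExpansionTerm]
  refine (sum_bij_ne_zero (fun g _ _ => Fin.castLE hkp ∘ g) ?_ ?_ ?_ fun _ _ _ => rfl).symm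
  · intro g _ hg
    have hinj := (Fin.castLE_injective hkp).of_comp_iff _ |>.mp
      (injective_of_detExpansionTerm_ne_zero hg)
    have hbij := Finite.injective_iff_bijective.mp hinj
    simpa [← Fin.sum_univ_eq_sum_range] using
      Equiv.sum_comp (Equiv.ofBijective g hbij) (fun i => (i : ℕ))
  · intro g₁ _ _ g₂ _ _ h
    funext i
    exact Fin.castLE_injective hkp (congrFun h i)
  · intro g hg hne
    have hlt := lt_card_of_sum_le_of_injective
      (Fin.val_injective.comp (injective_of_detExpansionTerm_ne_zero hne))
      (by simpa using (mem_filter.mp hg).2.le)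
    exact ⟨fun i => ⟨g i, by simpa using hlt i⟩, mem_univ _, hne, rfl⟩

theorem Matrix.det_vandermonde_pos {R : Type*} [CommRing R] [PartialOrder R]
    [IsStrictOrderedRing R] {k : ℕ} {v : Fin k → R} (hv : StrictMono v) :
    0 < (vandermonde v).det := by
  rw [det_vandermonde]
  exact prod_pos fun i _ => prod_pos fun j hj => sub_pos.2 (hv (mem_Ioi.1 hj))

theorem eventually_pos_sum_pow_mul {ι : Type*} [Fintype ι] (N : ι → ℕ) (a : ι → ℝ) (T : ℕ)
    (hT : ∀ i, a i ≠ 0 → T ≤ N i) (hpos : 0 < ∑ i with N i = T, a i) :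
    ∀ᶠ ε in 𝓝[>] 0, 0 < ∑ i, ε ^ N i * a i := by
  set F : ℝ → ℝ := fun ε => ∑ i, ε ^ (N i - T) * a i
  have hfactor : ∀ ε : ℝ, ∑ i, ε ^ N i * a i = ε ^ T * F ε := by
    intro ε
    rw [mul_sum]
    refine sum_congr rfl fun i _ => ?_
    by_cases ha : a i = 0
    · simp [ha]
    · rw [← mul_assoc, ← pow_add, Nat.add_sub_cancel' (hT i ha)]
  have hF0 : F 0 = ∑ i with N i = T, a i := by
    rw [sum_filter]
    refine sum_congr rfl fun i _ => ?_
    by_cases ha : a i = 0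
    · simp [ha]
    by_cases h : N i = T
    · simp [h]
    · have : N i - T ≠ 0 := by have := hT i ha; omega
      simp [h, zero_pow this]
  have hF : ∀ᶠ ε in 𝓝 0, 0 < F ε :=
    (continuous_finsetSum _ fun i _ => by fun_prop).continuousAt.eventually
      (eventually_gt_nhds (hpos.trans_eq hF0.symm))
  filter_upwards [hF.filter_mono nhdsWithin_le_nhds, self_mem_nhdsWithin] with ε hFε hε
  rw [hfactor]
  exact mul_pos (pow_pos hε T) hFε

theorem eventually_pos_mul_det_mul_diagonal_pow {k p : ℕ} (hkp : k ≤ p)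
    (M : Matrix (Fin k) (Fin p) ℝ) (N : Matrix (Fin p) (Fin k) ℝ)
    (hL : (M.submatrix id (Fin.castLE hkp)).det * (N.submatrix (Fin.castLE hkp) id).det ≠ 0) :
    ∀ᶠ ε in 𝓝[>] (0 : ℝ), 0 < (M.submatrix id (Fin.castLE hkp)).det *
      (N.submatrix (Fin.castLE hkp) id).det *
        (M * diagonal (fun s : Fin p => ε ^ (s : ℕ)) * N).det := by
  set L := (M.submatrix id (Fin.castLE hkp)).det * (N.submatrix (Fin.castLE hkp) id).det
  have hexpand : ∀ ε : ℝ, (M * diagonal (fun s : Fin p => ε ^ (s : ℕ)) * N).det =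
      ∑ g : Fin k → Fin p, ε ^ (∑ i, (g i : ℕ)) * detExpansionTerm M N g := by
    intro ε
    rw [det_mul_eq_sum_detExpansionTerm]
    refine sum_congr rfl fun g _ => ?_
    simp only [detExpansionTerm, mul_diagonal, prod_mul_distrib, prod_pow_eq_pow_sum]
    ring
  have hdeg : ∀ g : Fin k → Fin p, L * detExpansionTerm M N g ≠ 0 →
      ∑ j ∈ range k, j ≤ ∑ i, (g i : ℕ) := fun g hg => by
    simpa using sum_range_card_le_sum_of_injective
      (Fin.val_injective.comp (injective_of_detExpansionTerm_ne_zero (right_ne_zero_of_mul hg)))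
  filter_upwards [eventually_pos_sum_pow_mul _ _ _ hdeg (by
    rw [← mul_sum, sum_detExpansionTerm_of_sum_val_eq]; exact mul_self_pos.2 hL)] with ε hε
  rw [hexpand, mul_sum]
  simpa only [mul_left_comm] using hε

def signRatio (e : ℕ → ℝ) (s : ℕ) : ℝ := if s = 0 then e 1 else e (s + 1) * e s

theorem prod_range_signRatio {e : ℕ → ℝ} {k : ℕ} (hk : 1 ≤ k)
    (he : ∀ j, 1 ≤ j → j < k → e j ^ 2 = 1) : ∏ s ∈ range k, signRatio e s = e k := by
  induction k, hk using Nat.le_induction with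
  | base => simp [signRatio]
  | succ k hk ih =>
    rw [prod_range_succ, ih fun j hj hjk => he j hj (by omega), signRatio, if_neg (by omega),
      mul_left_comm, ← sq, he k hk (by omega), mul_one]

def powerMatrix (m p : ℕ) : Matrix (Fin m) (Fin p) ℝ := of fun i s => (i : ℝ) ^ (s : ℕ)

theorem powerMatrix_submatrix_castLE {m p k : ℕ} (r : Fin k → Fin m) (hkp : k ≤ p) :
    (powerMatrix m p).submatrix r (Fin.castLE hkp) = vandermonde fun i => (r i : ℝ) :=
  rfl

noncomputable def ssrMatrix (e : ℕ → ℝ) (m n : ℕ) (ε : ℝ) : Matrix (Fin m) (Fin n) ℝ :=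
  powerMatrix m (min m n) * diagonal (fun s : Fin (min m n) => signRatio e s) *
    diagonal (fun s : Fin (min m n) => ε ^ (s : ℕ)) * (powerMatrix n (min m n))ᵀ

theorem eventually_pos_mul_det_submatrix_ssrMatrix {m n k : ℕ} {e : ℕ → ℝ}
    (he : ∀ j, 1 ≤ j → j ≤ k → e j = 1 ∨ e j = -1) (hk : 0 < k) {r : Fin k → Fin m}
    {c : Fin k → Fin n} (hr : StrictMono r) (hc : StrictMono c) :
    ∀ᶠ ε in 𝓝[>] 0, 0 < e k * ((ssrMatrix e m n ε).submatrix r c).det := by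
  have hkp : k ≤ min m n :=
    le_min (Fin.le_of_injective r hr.injective) (Fin.le_of_injective c hc.injective)
  set M := (powerMatrix m (min m n) *
    diagonal (fun s : Fin (min m n) => signRatio e s)).submatrix r id
  set N := (powerMatrix n (min m n))ᵀ.submatrix id c
  have hminor : ∀ ε : ℝ, (ssrMatrix e m n ε).submatrix r c =
      M * diagonal (fun s : Fin (min m n) => ε ^ (s : ℕ)) * N := fun _ => rfl
  have hM : (M.submatrix id (Fin.castLE hkp)).det =
      (vandermonde fun i => (r i : ℝ)).det * e k := by
    have : M.submatrix id (Fin.castLE hkp) =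
        vandermonde (fun i => (r i : ℝ)) * diagonal (fun s : Fin k => signRatio e s) := by
      rw [← powerMatrix_submatrix_castLE r hkp]; ext i s; simp [M, mul_diagonal]
    rw [this, det_mul, det_diagonal, Fin.prod_univ_eq_prod_range (signRatio e),
      prod_range_signRatio hk fun j hj hjk => sq_eq_one_iff.mpr (he j hj hjk.le)]
  have hN : (N.submatrix (Fin.castLE hkp) id).det = (vandermonde fun i => (c i : ℝ)).det := by
    rw [← powerMatrix_submatrix_castLE c hkp, ← det_transpose]; rfl
  have hx : StrictMono fun i => (r i : ℝ) := fun i j hij => Nat.cast_lt.mpr (hr hij)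
  have hy : StrictMono fun i => (c i : ℝ) := fun i j hij => Nat.cast_lt.mpr (hc hij)
  have hV := mul_pos (det_vandermonde_pos hx) (det_vandermonde_pos hy)
  have hek : e k ≠ 0 := by rcases he k hk le_rfl with h | h <;> simp [h]
  have hL := eventually_pos_mul_det_mul_diagonal_pow hkp M N
    (by rw [hM, hN, mul_right_comm]; exact mul_ne_zero hV.ne' hek)
  filter_upwards [hL] with ε hε
  rw [hM, hN] at hε
  refine pos_of_mul_pos_right ?_ hV.le
  rw [hminor ε]
  rwa [mul_right_comm _ (e k), mul_assoc] at hε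

theorem exists_SSR_matrix_general (m n : ℕ) (e : ℕ → ℝ)
    (he : ∀ k, 1 ≤ k → k ≤ min m n → e k = 1 ∨ e k = -1) :
    ∃ A : Matrix (Fin m) (Fin n) ℝ,
      ∀ (k : ℕ) (r : Fin k → Fin m) (c : Fin k → Fin n),
        0 < k → StrictMono r → StrictMono c →
          0 < e k * (A.submatrix r c).det := by
  have hall : ∀ᶠ ε in 𝓝[>] (0 : ℝ), ∀ (k : Fin (min m n + 1)) (r : Fin k → Fin m)
      (c : Fin k → Fin n), 0 < (k : ℕ) → StrictMono r → StrictMono c →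
        0 < e k * ((ssrMatrix e m n ε).submatrix r c).det := by
    simp only [eventually_all]
    exact fun k r c hk hr hc => eventually_pos_mul_det_submatrix_ssrMatrix
      (fun j hj hjk => he j hj (by omega)) hk hr hc
  obtain ⟨ε, hε⟩ := hall.exists
  refine ⟨ssrMatrix e m n ε, fun k r c hk hr hc => hε ⟨k, ?_⟩ r c hk hr hc⟩
  have := le_min (Fin.le_of_injective r hr.injective) (Fin.le_of_injective c hc.injective)
  omega

/-- For any positive integers `m`, `n` and any signature `e` with `e k ∈ {-1, 1}`
for `1 ≤ k ≤ min m n`, there is an m-by-n real matrix that is strictly sign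
regular with signature `e`: every k-by-k minor `D` satisfies `e k * D > 0`. -/
theorem exists_SSR_matrix (m n : ℕ) (hm : 0 < m) (hn : 0 < n) (e : ℕ → ℝ)
    (he : ∀ k, 1 ≤ k → k ≤ min m n → e k = 1 ∨ e k = -1) :
    ∃ A : Matrix (Fin m) (Fin n) ℝ,
      ∀ (k : ℕ) (r : Fin k → Fin m) (c : Fin k → Fin n),
        0 < k → StrictMono r → StrictMono c →
          0 < e k * (A.submatrix r c).det :=
  exists_SSR_matrix_general m n e he
end

section
/- Let G be a bipartite graph with parts U (size m) and V (size n), and fix a signature (e_k) with e_k ∈ {−1,1}. Let X be an m-by-n strictly sign regular matrix with the flipped signature (e_1,...,e_{k−1},−e_k,−e_{k+1},...), and let M be the partial matrix whose (i,j) entry is specified equal to X(i,j) exactly when {u_i, v_j} is an edge of G. Then G contains a balanced biclique with k vertices on each side if and only if M has a fully specified k-by-k submatrix D with e_k · det(D) < 0; in particular, G has a balanced biclique of size 2k if and only if M is not partial strictly sign regular with signature (e_k). -/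
/-!
Since `X` is strictly sign regular, every minor of the partial matrix that is specified is a
minor of `X`, so its sign against `e` is dictated by the flipped signature: correct for sizes
below `k`, wrong for sizes `k` and above. Hence a violating specified minor exists exactly when
some specified submatrix of size at least `k` exists, i.e. when `G` has a balanced biclique of
size at least `k`; and any such biclique can be shrunk to one of size exactly `k`.
-/

open Finset

variable {α β : Type*}

def HasBalancedBiclique (E : α → β → Bool) (k : ℕ) : Prop :=
  ∃ (S : Finset α) (T : Finset β), #S = k ∧ #T = k ∧ ∀ i ∈ S, ∀ j ∈ T, E i j

theorem HasBalancedBiclique.mono {E : α → β → Bool} {k l : ℕ} (h : HasBalancedBiclique E l)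
    (hkl : k ≤ l) : HasBalancedBiclique E k := by
  obtain ⟨S, T, hS, hT, hST⟩ := h
  obtain ⟨S', hS'S, hS'⟩ := exists_subset_card_eq (hS ▸ hkl)
  obtain ⟨T', hT'T, hT'⟩ := exists_subset_card_eq (hT ▸ hkl)
  exact ⟨S', T', hS', hT', fun i hi j hj => hST i (hS'S hi) j (hT'T hj)⟩

theorem hasBalancedBiclique_iff_exists_strictMono [LinearOrder α] [LinearOrder β]
    {E : α → β → Bool} {k : ℕ} :
    HasBalancedBiclique E k ↔
      ∃ (r : Fin k → α) (c : Fin k → β), StrictMono r ∧ StrictMono c ∧ ∀ i j, E (r i) (c j) := by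
  constructor
  · rintro ⟨S, T, hS, hT, hST⟩
    exact ⟨S.orderEmbOfFin hS, T.orderEmbOfFin hT, (S.orderEmbOfFin hS).strictMono,
      (T.orderEmbOfFin hT).strictMono,
      fun i j => hST _ (S.orderEmbOfFin_mem hS i) _ (T.orderEmbOfFin_mem hT j)⟩
  · rintro ⟨r, c, hr, hc, hrc⟩
    refine ⟨univ.image r, univ.image c, ?_, ?_, ?_⟩
    · simp [card_image_of_injective _ hr.injective]
    · simp [card_image_of_injective _ hc.injective]
    · simp only [mem_image, mem_univ, true_and, forall_exists_index, forall_apply_eq_imp_iff]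
      exact hrc

theorem specified_submatrix_iff {ι κ R : Type*} {E : α → β → Bool} {X : Matrix α β R}
    {M : α → β → Option R} (hM : ∀ i j, M i j = if E i j then some (X i j) else none)
    (r : ι → α) (c : κ → β) (A : Matrix ι κ R) :
    (∀ i j, M (r i) (c j) = some (A i j)) ↔ (∀ i j, E (r i) (c j)) ∧ X.submatrix r c = A := by
  simp only [hM, Option.ite_none_right_eq_some, Option.some.injEq, ← Matrix.ext_iff,
    Matrix.submatrix_apply, ← forall_and]

theorem biclique_reduction_general (m n k : ℕ) (hk : 0 < k) (E : Fin m → Fin n → Bool)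
    (e : ℕ → ℝ)
    (X : Matrix (Fin m) (Fin n) ℝ)
    (hX : ∀ (l : ℕ) (r : Fin l → Fin m) (c : Fin l → Fin n),
      0 < l → StrictMono r → StrictMono c →
        0 < (if l < k then e l else -e l) * (X.submatrix r c).det)
    (M : Fin m → Fin n → Option ℝ)
    (hM : ∀ i j, M i j = if E i j then some (X i j) else none) :
    ((∃ (S : Finset (Fin m)) (T : Finset (Fin n)),
        S.card = k ∧ T.card = k ∧ ∀ i ∈ S, ∀ j ∈ T, E i j) ↔
      (∃ (r : Fin k → Fin m) (c : Fin k → Fin n) (A : Matrix (Fin k) (Fin k) ℝ),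
        StrictMono r ∧ StrictMono c ∧ (∀ i j, M (r i) (c j) = some (A i j)) ∧
          e k * A.det < 0)) ∧
    ((∃ (S : Finset (Fin m)) (T : Finset (Fin n)),
        S.card = k ∧ T.card = k ∧ ∀ i ∈ S, ∀ j ∈ T, E i j) ↔
      ¬ (∀ (l : ℕ) (r : Fin l → Fin m) (c : Fin l → Fin n), 0 < l →
          StrictMono r → StrictMono c →
          ∀ A : Matrix (Fin l) (Fin l) ℝ,
            (∀ i j, M (r i) (c j) = some (A i j)) → 0 < e l * A.det)) := by
  have hsign : ∀ l (r : Fin l → Fin m) (c : Fin l → Fin n), 0 < l → StrictMono r →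
      StrictMono c → (l < k → 0 < e l * (X.submatrix r c).det) ∧
        (k ≤ l → e l * (X.submatrix r c).det < 0) := by
    intro l r c hl hr hc
    have hD := hX l r c hl hr hc
    split_ifs at hD with hlk
    · exact ⟨fun _ => hD, fun hkl => absurd hlk hkl.not_gt⟩
    · exact ⟨fun h => absurd h hlk, fun _ => by linarith⟩
  show (HasBalancedBiclique E k ↔ _) ∧ (HasBalancedBiclique E k ↔ _)
  have biclique_iff_violating_minor : HasBalancedBiclique E k ↔
      ∃ (r : Fin k → Fin m) (c : Fin k → Fin n) (A : Matrix (Fin k) (Fin k) ℝ),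
        StrictMono r ∧ StrictMono c ∧ (∀ i j, M (r i) (c j) = some (A i j)) ∧
          e k * A.det < 0 := by
    simp only [specified_submatrix_iff hM, hasBalancedBiclique_iff_exists_strictMono]
    constructor
    · rintro ⟨r, c, hr, hc, hE⟩
      exact ⟨r, c, _, hr, hc, ⟨hE, rfl⟩, (hsign k r c hk hr hc).2 le_rfl⟩
    · rintro ⟨r, c, A, hr, hc, ⟨hE, -⟩, -⟩
      exact ⟨r, c, hr, hc, hE⟩
  refine ⟨biclique_iff_violating_minor, ⟨fun hbi hssr => ?_, fun hssr => ?_⟩⟩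
  · obtain ⟨r, c, A, hr, hc, hA, hdet⟩ := biclique_iff_violating_minor.1 hbi
    exact hdet.not_gt (hssr k r c hk hr hc A hA)
  · push Not at hssr
    obtain ⟨l, r, c, hl, hr, hc, A, hA, hdet⟩ := hssr
    obtain ⟨hE, rfl⟩ := (specified_submatrix_iff hM r c A).1 hA
    have hkl : k ≤ l := not_lt.1 fun hlk => hdet.not_gt ((hsign l r c hl hr hc).1 hlk)
    exact (hasBalancedBiclique_iff_exists_strictMono.2 ⟨r, c, hr, hc, hE⟩).mono hkl

/-- The co-NP-hardness reduction: let `G` be a bipartite graph with parts of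
sizes `m` and `n` (adjacency `E`), `e` a ±1 signature, and `X` an m-by-n matrix
that is strictly sign regular with the signature flipped from position `k` on,
i.e. every l-by-l minor `D` of `X` satisfies `f l * D > 0` where `f l = e l` for
`l < k` and `f l = -e l` for `l ≥ k`.  Let `M` be the partial matrix whose
`(i,j)` entry is specified equal to `X i j` exactly when `{u_i, v_j}` is an edge.
Then `G` has a balanced biclique with `k` vertices on each side iff `M` has a
fully specified k-by-k submatrix `D` with `e k * det D < 0`, and iff `M` is not
partial strictly sign regular with signature `e`. -/
theorem biclique_reduction (m n k : ℕ) (hk : 0 < k) (E : Fin m → Fin n → Bool)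
    (e : ℕ → ℝ) (he : ∀ l, 1 ≤ l → l ≤ min m n → e l = 1 ∨ e l = -1)
    (X : Matrix (Fin m) (Fin n) ℝ)
    (hX : ∀ (l : ℕ) (r : Fin l → Fin m) (c : Fin l → Fin n),
      0 < l → StrictMono r → StrictMono c →
        0 < (if l < k then e l else -e l) * (X.submatrix r c).det)
    (M : Fin m → Fin n → Option ℝ)
    (hM : ∀ i j, M i j = if E i j then some (X i j) else none) :
    ((∃ (S : Finset (Fin m)) (T : Finset (Fin n)),
        S.card = k ∧ T.card = k ∧ ∀ i ∈ S, ∀ j ∈ T, E i j) ↔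
      (∃ (r : Fin k → Fin m) (c : Fin k → Fin n) (A : Matrix (Fin k) (Fin k) ℝ),
        StrictMono r ∧ StrictMono c ∧ (∀ i j, M (r i) (c j) = some (A i j)) ∧
          e k * A.det < 0)) ∧
    ((∃ (S : Finset (Fin m)) (T : Finset (Fin n)),
        S.card = k ∧ T.card = k ∧ ∀ i ∈ S, ∀ j ∈ T, E i j) ↔
      ¬ (∀ (l : ℕ) (r : Fin l → Fin m) (c : Fin l → Fin n), 0 < l →
          StrictMono r → StrictMono c →
          ∀ A : Matrix (Fin l) (Fin l) ℝ,
            (∀ i j, M (r i) (c j) = some (A i j)) → 0 < e l * A.det)) :=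
  biclique_reduction_general m n k hk E e X hX M hM
end

section
/- If a bipartite graph G has vertices a (in part U) and b (in part V) with no edge between them, then every maximal biclique of G is a maximal biclique of G − a or of G − b (the induced subgraphs obtained by deleting a or b respectively). -/
/-- `(S, T)` is a biclique of the bipartite graph with parts `U`, `V` and
adjacency `E`. -/
def Biclique {U V : Type*} (E : U → V → Prop) (S : Finset U) (T : Finset V) : Prop :=
  ∀ u ∈ S, ∀ v ∈ T, E u v

/-- Maximality of `(S, T)` with respect to a class `P` of bicliques: no member
of `P` properly contains `(S, T)` componentwise. -/
def MaximalAmong {U V : Type*} (P : Finset U → Finset V → Prop)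
    (S : Finset U) (T : Finset V) : Prop :=
  P S T ∧ ∀ S' T', P S' T' → S ⊆ S' → T ⊆ T' → S' = S ∧ T' = T

theorem MaximalAmong.of_imp {U V : Type*} {P Q : Finset U → Finset V → Prop}
    {S : Finset U} {T : Finset V} (h : MaximalAmong P S T)
    (hQP : ∀ S' T', Q S' T' → P S' T') (hQ : Q S T) : MaximalAmong Q S T :=
  ⟨hQ, fun S' T' hQ' => h.2 S' T' (hQP S' T' hQ')⟩

/-- If `a ∈ U` and `b ∈ V` are nonadjacent, then every maximal biclique of `G`
is a maximal biclique of `G - a` or of `G - b`. -/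
theorem maximal_biclique_deleted (U V : Type*) (E : U → V → Prop) (a : U) (b : V)
    (hab : ¬ E a b) (S : Finset U) (T : Finset V)
    (hmax : MaximalAmong (Biclique E) S T) :
    MaximalAmong (fun S' T' => Biclique E S' T' ∧ a ∉ S') S T ∨
    MaximalAmong (fun S' T' => Biclique E S' T' ∧ b ∉ T') S T := by
  by_cases ha : a ∈ S
  · have hb : b ∉ T := fun hb => hab (hmax.1 a ha b hb)
    exact Or.inr (hmax.of_imp (fun _ _ => And.left) ⟨hmax.1, hb⟩)
  · exact Or.inl (hmax.of_imp (fun _ _ => And.left) ⟨hmax.1, ha⟩)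
end

section
/- If a partial matrix M has exactly one unspecified entry, at position (i,j), then M is partial totally positive if and only if the (fully specified) matrix obtained by deleting row i is totally positive and the matrix obtained by deleting column j is totally positive. -/
/-!
Deleting row `i` or column `j` gives fully specified submatrices of `M`, so partial total
positivity of `M` restricts to them. Conversely, a fully specified square submatrix of `M`
cannot meet both row `i` and column `j`, since it would then contain the unspecified entry;
so it avoids row `i` or column `j`, and is then a square submatrix of `A` or of `B`.
-/

/-- A real matrix is totally positive if every minor is positive. -/
def TotallyPositive {m n : ℕ} (A : Matrix (Fin m) (Fin n) ℝ) : Prop :=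
  ∀ (k : ℕ) (r : Fin k → Fin m) (c : Fin k → Fin n),
    StrictMono r → StrictMono c → 0 < (A.submatrix r c).det

/-- Partial total positivity: every fully specified square submatrix has
positive determinant. -/
def PartialTP {m n : ℕ} (M : Fin m → Fin n → Option ℝ) : Prop :=
  ∀ (k : ℕ) (r : Fin k → Fin m) (c : Fin k → Fin n), StrictMono r → StrictMono c →
    ∀ A : Matrix (Fin k) (Fin k) ℝ, (∀ i j, M (r i) (c j) = some (A i j)) → 0 < A.det

lemma StrictMono.exists_strictMono_comp_eq {α β γ : Type*} [LinearOrder α] [Preorder β]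
    [Preorder γ] {f : α → β} (hf : StrictMono f) {r : γ → β} (hr : StrictMono r)
    (hrf : ∀ a, r a ∈ Set.range f) : ∃ r' : γ → α, StrictMono r' ∧ f ∘ r' = r := by
  choose r' hr' using hrf
  refine ⟨r', fun a b hab => ?_, funext hr'⟩
  rw [← hf.lt_iff_lt, hr', hr']
  exact hr hab

section

variable {m n m' n' : ℕ} {M : Fin m → Fin n → Option ℝ} {A : Matrix (Fin m') (Fin n') ℝ}
  {f : Fin m' → Fin m} {g : Fin n' → Fin n}

lemma PartialTP.totallyPositive (hM : PartialTP M) (hf : StrictMono f) (hg : StrictMono g)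
    (hMA : ∀ a b, M (f a) (g b) = some (A a b)) : TotallyPositive A :=
  fun k r c hr hc =>
    hM k (f ∘ r) (g ∘ c) (hf.comp hr) (hg.comp hc) _ fun a b => hMA (r a) (c b)

lemma TotallyPositive.det_pos_of_specified (hA : TotallyPositive A) (hf : StrictMono f)
    (hg : StrictMono g) (hMA : ∀ a b, M (f a) (g b) = some (A a b)) {k : ℕ}
    {r : Fin k → Fin m} {c : Fin k → Fin n} (hr : StrictMono r) (hc : StrictMono c)
    (hrf : ∀ a, r a ∈ Set.range f) (hcg : ∀ b, c b ∈ Set.range g)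
    {A' : Matrix (Fin k) (Fin k) ℝ} (hA' : ∀ a b, M (r a) (c b) = some (A' a b)) :
    0 < A'.det := by
  obtain ⟨r', hr'mono, rfl⟩ := hf.exists_strictMono_comp_eq hr hrf
  obtain ⟨c', hc'mono, rfl⟩ := hg.exists_strictMono_comp_eq hc hcg
  have hsub : A.submatrix r' c' = A' := by
    ext a b
    exact Option.some_injective _ ((hMA (r' a) (c' b)).symm.trans (hA' a b))
  exact hsub ▸ hA k r' c' hr'mono hc'mono

end

/-- If a partial matrix `M` has exactly one unspecified entry, at position
`(i,j)`, then `M` is partial totally positive iff the conventional matrix `A`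
obtained by deleting row `i` is totally positive and the conventional matrix
`B` obtained by deleting column `j` is totally positive. -/
theorem partialTP_one_unspecified (m n : ℕ)
    (M : Fin (m + 1) → Fin (n + 1) → Option ℝ) (i : Fin (m + 1)) (j : Fin (n + 1))
    (hone : ∀ a b, M a b = none ↔ a = i ∧ b = j)
    (A : Matrix (Fin m) (Fin (n + 1)) ℝ) (hA : ∀ a b, M (i.succAbove a) b = some (A a b))
    (B : Matrix (Fin (m + 1)) (Fin n) ℝ) (hB : ∀ a b, M a (j.succAbove b) = some (B a b)) :
    PartialTP M ↔ TotallyPositive A ∧ TotallyPositive B := by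
  have hi := Fin.strictMono_succAbove i
  have hj := Fin.strictMono_succAbove j
  refine ⟨fun hM => ⟨hM.totallyPositive hi strictMono_id hA,
    hM.totallyPositive strictMono_id hj hB⟩, ?_⟩
  rintro ⟨hTA, hTB⟩ k r c hr hc A' hA'
  rcases em (∃ a, r a = i) with ⟨a₀, rfl⟩ | hrow
  · have hcol : ∀ b, c b ≠ j := by
      rintro b rfl
      simpa [(hone _ _).mpr ⟨rfl, rfl⟩] using hA' a₀ b
    exact hTB.det_pos_of_specified strictMono_id hj hB hr hc
      (fun a => ⟨r a, rfl⟩) (fun b => Fin.exists_succAbove_eq (hcol b)) hA'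
  · exact hTA.det_pos_of_specified hi strictMono_id hA hr hc
      (fun a => Fin.exists_succAbove_eq fun h => hrow ⟨a, h⟩) (fun b => ⟨c b, rfl⟩) hA'
end
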